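/- Under the hypotheses of the previous theorem (universal₂ hash family from A to {1,…,M}), the expected mutual information satisfies E_X I(f_X(A):E) ≤ (1/s)·M^s·e^{−H̃_{1+s}(A|E)} for every s ∈ (0,1]. In particular there exists a fixed function f: A → {1,…,M} with I(f(A):E) ≤ (1/s)·M^s·e^{−H̃_{1+s}(A|E)}. -/

import Mathlib

/-!
For a single hash function, `H(f(A)) ≤ log M` and Jensen's inequality for `log`, applied to the
weights `P(f(A), E)` and the values `P(f(A) | E)^s`, give
`s · I(f(A):E) ≤ log (M^s e^{-H̃_{1+s}(f(A)|E)}) ≤ M^s e^{-H̃_{1+s}(f(A)|E)} - 1`.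
The right-hand side is affine in `e^{-H̃_{1+s}(f(A)|E)}`, so it suffices to average that quantity
over the family. The bucket of `a` carries `P(a,e)` plus the mass of the elements colliding with
`a`, whose average is at most `P(e)/M` by universality; subadditivity and concavity of `t ↦ t^s`
then bound the average by `e^{-H̃_{1+s}(A|E)} + M^{-s}`, and `M^s · M^{-s}` cancels the `-1`.
Some member of the family is at most the average.
-/

open Real Finset

section FiniteAverages

variable {ι : Type*} [Fintype ι]

theorem sum_mul_log_le_log_sum_mul {w x : ι → ℝ} (hw : ∀ i, 0 ≤ w i) (hw1 : ∑ i, w i = 1)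
    (hx : ∀ i, w i ≠ 0 → 0 < x i) :
    ∑ i, w i * log (x i) ≤ log (∑ i, w i * x i) := by
  classical
  have hsupp (g : ι → ℝ) : ∑ i with w i ≠ 0, w i * g i = ∑ i, w i * g i :=
    sum_filter_of_ne fun _ _ h => left_ne_zero_of_mul h
  have hw1' : ∑ i with w i ≠ 0, w i = 1 := by rw [sum_filter_ne_zero, hw1]
  have := strictConcaveOn_log_Ioi.concaveOn.le_map_sum (fun i _ => hw i) hw1'
    fun i hi => hx i (mem_filter.1 hi).2
  simpa only [smul_eq_mul, hsupp] using this

theorem neg_sum_mul_log_le_log_card {q : ι → ℝ} (hq : ∀ i, 0 ≤ q i) (hq1 : ∑ i, q i = 1) :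
    -∑ i, q i * log (q i) ≤ log (Fintype.card ι) := by
  obtain ⟨i₀, -, hi₀⟩ := exists_ne_zero_of_sum_ne_zero (hq1 ▸ one_ne_zero)
  have hpos : 0 < ∑ i, q i * (q i)⁻¹ :=
    sum_pos' (fun i _ => mul_nonneg (hq i) (inv_nonneg.2 (hq i)))
      ⟨i₀, mem_univ _, by rw [mul_inv_cancel₀ hi₀]; exact one_pos⟩
  have hle : ∑ i, q i * (q i)⁻¹ ≤ Fintype.card ι := by
    simpa using sum_le_sum fun i (_ : i ∈ univ) => mul_inv_le_one (a := q i)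
  calc -∑ i, q i * log (q i) = ∑ i, q i * log (q i)⁻¹ := by simp [log_inv]
    _ ≤ log (∑ i, q i * (q i)⁻¹) :=
      sum_mul_log_le_log_sum_mul hq hq1 fun i hi => inv_pos.2 ((hq i).lt_of_ne' hi)
    _ ≤ log (Fintype.card ι) := log_le_log hpos hle

theorem mul_sum_mul_log_div_le_log_sum_rpow {q r : ι → ℝ} {s : ℝ} (hs : 0 < 1 + s)
    (hq : ∀ i, 0 ≤ q i) (hq1 : ∑ i, q i = 1) (hr : ∀ i, q i ≠ 0 → 0 < r i) :
    s * ∑ i, q i * log (q i / r i) ≤ log (∑ i, q i ^ (1 + s) * r i ^ (-s)) := by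
  have hlog (i : ι) : q i * log ((q i / r i) ^ s) = s * (q i * log (q i / r i)) := by
    rcases eq_or_ne (q i) 0 with h | h
    · simp [h]
    · rw [log_rpow (div_pos ((hq i).lt_of_ne' h) (hr i h))]; ring
  have hpow (i : ι) : q i * (q i / r i) ^ s = q i ^ (1 + s) * r i ^ (-s) := by
    rcases eq_or_ne (q i) 0 with h | h
    · simp [h, zero_rpow hs.ne']
    · rw [div_rpow (hq i) (hr i h).le, rpow_neg (hr i h).le, rpow_add' (hq i) hs.ne', rpow_one]
      ring
  have := sum_mul_log_le_log_sum_mul (x := fun i => (q i / r i) ^ s) hq hq1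
    fun i hi => rpow_pos_of_pos (div_pos ((hq i).lt_of_ne' hi) (hr i hi)) s
  simpa only [hlog, hpow, ← mul_sum] using this

theorem exists_le_of_sum_mul_le {w x : ι → ℝ} {b : ℝ} (hw : ∀ i, 0 ≤ w i)
    (hw1 : ∑ i, w i = 1) (h : ∑ i, w i * x i ≤ b) : ∃ i, x i ≤ b := by
  obtain ⟨i₀, -, hi₀⟩ := exists_ne_zero_of_sum_ne_zero (hw1 ▸ one_ne_zero)
  by_contra! hlt
  have : ∑ i, w i * b < ∑ i, w i * x i :=
    sum_lt_sum (fun i _ => mul_le_mul_of_nonneg_left (hlt i).le (hw i))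
      ⟨i₀, mem_univ _, mul_lt_mul_of_pos_left (hlt i₀) ((hw i₀).lt_of_ne' hi₀)⟩
  rw [← sum_mul, hw1, one_mul] at this
  linarith

end FiniteAverages

section JointDistribution

variable {ι E : Type*} [Fintype ι] [Fintype E]

noncomputable def mutualInfo (Q : ι × E → ℝ) : ℝ :=
  (-∑ i, (∑ e, Q (i, e)) * log (∑ e, Q (i, e))) -
    (-∑ i, ∑ e, Q (i, e) * log (Q (i, e) / ∑ i', Q (i', e)))

/-- `exp (-H̃_{1+s}(X|E))` for the joint distribution `Q` of `(X, E)`. -/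
noncomputable def condRenyiExp (s : ℝ) (Q : ι × E → ℝ) : ℝ :=
  ∑ i, ∑ e, Q (i, e) ^ (1 + s) * (∑ i', Q (i', e)) ^ (-s)

theorem condRenyiExp_pos {Q : ι × E → ℝ} (hQ : ∀ p, 0 ≤ Q p) (hQ1 : ∑ p, Q p = 1) (s : ℝ) :
    0 < condRenyiExp s Q := by
  obtain ⟨⟨i₀, e₀⟩, -, h₀⟩ := exists_ne_zero_of_sum_ne_zero (hQ1 ▸ one_ne_zero)
  have hQ₀ : 0 < Q (i₀, e₀) := (hQ _).lt_of_ne' h₀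
  have hmarg : 0 < ∑ i, Q (i, e₀) :=
    hQ₀.trans_le (single_le_sum (fun i _ => hQ (i, e₀)) (mem_univ i₀))
  have hterm (i : ι) (e : E) : 0 ≤ Q (i, e) ^ (1 + s) * (∑ i', Q (i', e)) ^ (-s) :=
    mul_nonneg (rpow_nonneg (hQ _) _) (rpow_nonneg (sum_nonneg fun _ _ => hQ _) _)
  exact sum_pos' (fun i _ => sum_nonneg fun e _ => hterm i e)
    ⟨i₀, mem_univ _, sum_pos' (fun e _ => hterm i₀ e)
      ⟨e₀, mem_univ _, mul_pos (rpow_pos_of_pos hQ₀ _) (rpow_pos_of_pos hmarg _)⟩⟩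

theorem mul_mutualInfo_le {Q : ι × E → ℝ} (hQ : ∀ p, 0 ≤ Q p) (hQ1 : ∑ p, Q p = 1) {s : ℝ}
    (hs : 0 < s) : s * mutualInfo Q ≤ (Fintype.card ι : ℝ) ^ s * condRenyiExp s Q - 1 := by
  obtain ⟨p₀, -, -⟩ := exists_ne_zero_of_sum_ne_zero (hQ1 ▸ one_ne_zero)
  have hcard : (0 : ℝ) < Fintype.card ι := Nat.cast_pos.2 (Fintype.card_pos_iff.2 ⟨p₀.1⟩)
  have hentropy := neg_sum_mul_log_le_log_card (fun i => sum_nonneg fun e _ => hQ (i, e))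
    (by rwa [← Fintype.sum_prod_type])
  have hcond := mul_sum_mul_log_div_le_log_sum_rpow (s := s) (r := fun p => ∑ i, Q (i, p.2))
    (by linarith) hQ hQ1 fun p hp =>
      ((hQ p).lt_of_ne' hp).trans_le (single_le_sum (fun i _ => hQ (i, p.2)) (mem_univ p.1))
  simp only [Fintype.sum_prod_type] at hcond
  have hK := condRenyiExp_pos hQ hQ1 s
  calc s * mutualInfo Q ≤ log ((Fintype.card ι : ℝ) ^ s) + log (condRenyiExp s Q) := by
        have := mul_le_mul_of_nonneg_left hentropy hs.le
        rw [log_rpow hcard]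
        unfold mutualInfo condRenyiExp
        linarith
    _ = log ((Fintype.card ι : ℝ) ^ s * condRenyiExp s Q) :=
        (log_mul (rpow_pos_of_pos hcard s).ne' hK.ne').symm
    _ ≤ (Fintype.card ι : ℝ) ^ s * condRenyiExp s Q - 1 :=
        log_le_sub_one_of_pos (mul_pos (rpow_pos_of_pos hcard s) hK)

end JointDistribution

section MapFst

variable {A ι E : Type*} [Fintype A] [DecidableEq ι]

def mapFst (g : A → ι) (P : A × E → ℝ) : ι × E → ℝ :=
  fun p => ∑ a ∈ univ.filter (fun a => g a = p.1), P (a, p.2)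

theorem sum_mapFst_fst [Fintype ι] (g : A → ι) (P : A × E → ℝ) (e : E) :
    ∑ i, mapFst g P (i, e) = ∑ a, P (a, e) :=
  sum_fiberwise univ g fun a => P (a, e)

theorem sum_mapFst [Fintype ι] [Fintype E] (g : A → ι) (P : A × E → ℝ) :
    ∑ p, mapFst g P p = ∑ p, P p := by
  simp only [Fintype.sum_prod_type_right, sum_mapFst_fst]

theorem mutualInfo_mapFst [Fintype ι] [Fintype E] (g : A → ι) (P : A × E → ℝ) :
    mutualInfo (mapFst g P) =
      (-∑ i, (∑ e, ∑ a ∈ univ.filter (fun a => g a = i), P (a, e)) *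
          log (∑ e, ∑ a ∈ univ.filter (fun a => g a = i), P (a, e)))
        - (-∑ i, ∑ e, (∑ a ∈ univ.filter (fun a => g a = i), P (a, e)) *
            log ((∑ a ∈ univ.filter (fun a => g a = i), P (a, e)) / (∑ a', P (a', e)))) := by
  simp only [mutualInfo, sum_mapFst_fst]
  rfl

end MapFst

section Hashing

variable {Ω A ι : Type*} [Fintype Ω] [DecidableEq ι]

/-- Universal₂ hashing into `Fin M` is the case `δ = 1 / M`. -/
def IsAlmostUniversal (μ : Ω → ℝ) (f : Ω → A → ι) (δ : ℝ) : Prop :=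
  ∀ a₁ a₂, a₁ ≠ a₂ → ∑ ω ∈ univ.filter (fun ω => f ω a₁ = f ω a₂), μ ω ≤ δ

section Collision

variable [Fintype A] [DecidableEq A]

noncomputable def collisionMass (g : A → ι) (p : A → ℝ) (a : A) : ℝ :=
  ∑ a' ∈ univ.erase a, if g a' = g a then p a' else 0

theorem collisionMass_nonneg (g : A → ι) {p : A → ℝ} (hp : ∀ a, 0 ≤ p a) (a : A) :
    0 ≤ collisionMass g p a :=
  sum_nonneg fun a' _ => by split_ifs <;> simp [hp a']

theorem sum_fiber_eq_add_collisionMass (g : A → ι) (p : A → ℝ) (a : A) :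
    ∑ a' ∈ univ.filter (fun a' => g a' = g a), p a' = p a + collisionMass g p a := by
  rw [sum_filter, ← add_sum_erase _ _ (mem_univ a), if_pos rfl, collisionMass]

theorem sum_fiber_rpow_one_add_le [Fintype ι] (g : A → ι) {p : A → ℝ} (hp : ∀ a, 0 ≤ p a)
    {s : ℝ} (hs0 : 0 ≤ s) (hs1 : s ≤ 1) :
    ∑ i, (∑ a ∈ univ.filter (fun a => g a = i), p a) ^ (1 + s) ≤
      ∑ a, (p a ^ (1 + s) + p a * collisionMass g p a ^ s) := by
  have hs : (1 : ℝ) + s ≠ 0 := by linarith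
  calc ∑ i, (∑ a ∈ univ.filter (fun a => g a = i), p a) ^ (1 + s)
      = ∑ a, p a * (∑ a' ∈ univ.filter (fun a' => g a' = g a), p a') ^ s := by
        rw [← sum_fiberwise univ g]
        refine sum_congr rfl fun i _ => ?_
        rw [rpow_add' (sum_nonneg fun a _ => hp a) hs, rpow_one, sum_mul]
        exact sum_congr rfl fun a ha => by rw [(mem_filter.1 ha).2]
    _ ≤ ∑ a, p a * (p a ^ s + collisionMass g p a ^ s) := by
        refine sum_le_sum fun a _ => mul_le_mul_of_nonneg_left ?_ (hp a)
        rw [sum_fiber_eq_add_collisionMass]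
        exact rpow_add_le_add_rpow (hp a) (collisionMass_nonneg g hp a) hs0 hs1
    _ = ∑ a, (p a ^ (1 + s) + p a * collisionMass g p a ^ s) := by
        simp only [mul_add, rpow_add' (hp _) hs, rpow_one]

theorem IsAlmostUniversal.sum_mul_collisionMass_le {μ : Ω → ℝ} {f : Ω → A → ι} {δ : ℝ}
    (hf : IsAlmostUniversal μ f δ) (hδ : 0 ≤ δ) {p : A → ℝ} (hp : ∀ a, 0 ≤ p a) (a : A) :
    ∑ ω, μ ω * collisionMass (f ω) p a ≤ δ * ∑ a', p a' := by
  calc ∑ ω, μ ω * collisionMass (f ω) p a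
      = ∑ a' ∈ univ.erase a, (∑ ω ∈ univ.filter (fun ω => f ω a' = f ω a), μ ω) * p a' := by
        simp only [collisionMass, mul_sum, mul_ite, mul_zero]
        rw [sum_comm]
        exact sum_congr rfl fun a' _ => by rw [sum_mul, sum_filter]
    _ ≤ ∑ a' ∈ univ.erase a, δ * p a' :=
        sum_le_sum fun a' ha' => mul_le_mul_of_nonneg_right (hf a' a (ne_of_mem_erase ha')) (hp a')
    _ ≤ ∑ a', δ * p a' :=
        sum_le_sum_of_subset_of_nonneg (erase_subset _ _) fun a' _ _ => mul_nonneg hδ (hp a')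
    _ = δ * ∑ a', p a' := (mul_sum _ _ _).symm

end Collision

variable [Fintype A] [Fintype ι]

theorem IsAlmostUniversal.sum_mul_sum_fiber_rpow_le {μ : Ω → ℝ} {f : Ω → A → ι}
    {δ : ℝ} (hf : IsAlmostUniversal μ f δ) (hδ : 0 ≤ δ) (hμ : ∀ ω, 0 ≤ μ ω)
    (hμ1 : ∑ ω, μ ω = 1) {p : A → ℝ} (hp : ∀ a, 0 ≤ p a) {s : ℝ} (hs0 : 0 ≤ s) (hs1 : s ≤ 1) :
    ∑ ω, μ ω * ∑ i, (∑ a ∈ univ.filter (fun a => f ω a = i), p a) ^ (1 + s) ≤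
      ∑ a, p a ^ (1 + s) + δ ^ s * (∑ a, p a) ^ (1 + s) := by
  classical
  have hcollision (a : A) :
      ∑ ω, μ ω * collisionMass (f ω) p a ^ s ≤ δ ^ s * (∑ a', p a') ^ s :=
    calc ∑ ω, μ ω * collisionMass (f ω) p a ^ s
        ≤ (∑ ω, μ ω * collisionMass (f ω) p a) ^ s := by
          simpa only [smul_eq_mul] using (concaveOn_rpow hs0 hs1).le_map_sum
            (fun ω _ => hμ ω) hμ1 fun ω _ => Set.mem_Ici.2 (collisionMass_nonneg (f ω) hp a)
      _ ≤ (δ * ∑ a', p a') ^ s :=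
          rpow_le_rpow (sum_nonneg fun ω _ => mul_nonneg (hμ ω) (collisionMass_nonneg _ hp a))
            (hf.sum_mul_collisionMass_le hδ hp a) hs0
      _ = δ ^ s * (∑ a', p a') ^ s := mul_rpow hδ (sum_nonneg fun a' _ => hp a')
  calc ∑ ω, μ ω * ∑ i, (∑ a ∈ univ.filter (fun a => f ω a = i), p a) ^ (1 + s)
      ≤ ∑ ω, μ ω * ∑ a, (p a ^ (1 + s) + p a * collisionMass (f ω) p a ^ s) :=
        sum_le_sum fun ω _ =>
          mul_le_mul_of_nonneg_left (sum_fiber_rpow_one_add_le (f ω) hp hs0 hs1) (hμ ω)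
    _ = ∑ a, p a ^ (1 + s) + ∑ a, p a * ∑ ω, μ ω * collisionMass (f ω) p a ^ s := by
        simp only [mul_add, sum_add_distrib, ← sum_mul, hμ1, one_mul, add_right_inj]
        simp only [mul_sum]
        rw [sum_comm]
        simp only [mul_left_comm]
    _ ≤ ∑ a, p a ^ (1 + s) + ∑ a, p a * (δ ^ s * (∑ a', p a') ^ s) := by
        gcongr with a
        exacts [hp a, hcollision a]
    _ = ∑ a, p a ^ (1 + s) + δ ^ s * (∑ a, p a) ^ (1 + s) := by
        rw [← sum_mul, rpow_add' (sum_nonneg fun a _ => hp a) (by linarith), rpow_one]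
        ring

theorem IsAlmostUniversal.sum_mul_condRenyiExp_mapFst_le {E : Type*} [Fintype E]
    {μ : Ω → ℝ} {f : Ω → A → ι} {δ : ℝ} (hf : IsAlmostUniversal μ f δ) (hδ : 0 ≤ δ)
    (hμ : ∀ ω, 0 ≤ μ ω) (hμ1 : ∑ ω, μ ω = 1) {P : A × E → ℝ} (hP : ∀ p, 0 ≤ P p)
    (hP1 : ∑ p, P p = 1) {s : ℝ} (hs0 : 0 ≤ s) (hs1 : s ≤ 1) :
    ∑ ω, μ ω * condRenyiExp s (mapFst (f ω) P) ≤ condRenyiExp s P + δ ^ s := by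
  have hPE (e : E) : 0 ≤ ∑ a, P (a, e) := sum_nonneg fun a _ => hP (a, e)
  calc ∑ ω, μ ω * condRenyiExp s (mapFst (f ω) P)
      = ∑ e, (∑ a, P (a, e)) ^ (-s) * ∑ ω, μ ω * ∑ i, mapFst (f ω) P (i, e) ^ (1 + s) := by
        simp only [condRenyiExp, sum_mapFst_fst, mul_sum]
        rw [sum_comm_cycle]
        exact sum_congr rfl fun e _ => sum_congr rfl fun ω _ => sum_congr rfl fun i _ => by ring
    _ ≤ ∑ e, (∑ a, P (a, e)) ^ (-s) *
          (∑ a, P (a, e) ^ (1 + s) + δ ^ s * (∑ a, P (a, e)) ^ (1 + s)) :=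
        sum_le_sum fun e _ => mul_le_mul_of_nonneg_left
          (hf.sum_mul_sum_fiber_rpow_le hδ hμ hμ1 (fun a => hP (a, e)) hs0 hs1)
          (rpow_nonneg (hPE e) _)
    _ = ∑ e, (∑ a, P (a, e) ^ (1 + s) * (∑ a, P (a, e)) ^ (-s) + δ ^ s * ∑ a, P (a, e)) := by
        refine sum_congr rfl fun e _ => ?_
        rw [mul_add, mul_left_comm _ (δ ^ s), ← rpow_add' (hPE e) (by norm_num),
          neg_add_cancel_comm_assoc, rpow_one, mul_comm (_ ^ (-s)), sum_mul]
    _ = condRenyiExp s P + δ ^ s * ∑ e, ∑ a, P (a, e) := by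
        rw [sum_add_distrib, ← mul_sum, condRenyiExp, sum_comm]
    _ = condRenyiExp s P + δ ^ s := by rw [← Fintype.sum_prod_type_right, hP1, mul_one]

end Hashing

theorem expected_mutual_info_hash_bound_general
    {A E Ω : Type*} [Fintype A] [Fintype E] [Fintype Ω]
    (M : ℕ) (hM : 0 < M)
    (μ : Ω → ℝ) (hμ : ∀ ω, 0 ≤ μ ω) (hμ1 : ∑ ω, μ ω = 1)
    (f : Ω → A → Fin M)
    (huniv : ∀ a₁ a₂ : A, a₁ ≠ a₂ →
      ∑ ω ∈ univ.filter (fun ω => f ω a₁ = f ω a₂), μ ω ≤ 1 / M)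
    (P : A × E → ℝ) (hP : ∀ p, 0 ≤ P p) (hP1 : ∑ p, P p = 1)
    (s : ℝ) (hs0 : 0 < s) (hs1 : s ≤ 1) :
    -- mutual information of the hashed variable with E, for the function `f ω`
    (∑ ω, μ ω *
        ((-∑ i : Fin M,
            (∑ e, ∑ a ∈ univ.filter (fun a => f ω a = i), P (a, e)) *
              Real.log (∑ e, ∑ a ∈ univ.filter (fun a => f ω a = i), P (a, e)))
          - (-∑ i : Fin M, ∑ e,
              (∑ a ∈ univ.filter (fun a => f ω a = i), P (a, e)) *
                Real.log ((∑ a ∈ univ.filter (fun a => f ω a = i), P (a, e)) /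
                  (∑ a', P (a', e)))))
      ≤ (1 / s) * (M : ℝ) ^ s *
          Real.exp (-(-Real.log (∑ a, ∑ e, P (a, e) ^ (1 + s) * (∑ a', P (a', e)) ^ (-s)))))
    ∧ (∃ ω : Ω,
        ((-∑ i : Fin M,
            (∑ e, ∑ a ∈ univ.filter (fun a => f ω a = i), P (a, e)) *
              Real.log (∑ e, ∑ a ∈ univ.filter (fun a => f ω a = i), P (a, e)))
          - (-∑ i : Fin M, ∑ e,
              (∑ a ∈ univ.filter (fun a => f ω a = i), P (a, e)) *
                Real.log ((∑ a ∈ univ.filter (fun a => f ω a = i), P (a, e)) /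
                  (∑ a', P (a', e)))))
        ≤ (1 / s) * (M : ℝ) ^ s *
            Real.exp (-(-Real.log (∑ a, ∑ e, P (a, e) ^ (1 + s) * (∑ a', P (a', e)) ^ (-s))))) := by
  simp only [← mutualInfo_mapFst, ← condRenyiExp.eq_1, neg_neg, exp_log (condRenyiExp_pos hP hP1 s)]
  have hMI (ω : Ω) : s * mutualInfo (mapFst (f ω) P) ≤
      (M : ℝ) ^ s * condRenyiExp s (mapFst (f ω) P) - 1 := by
    simpa only [Fintype.card_fin] using mul_mutualInfo_le (Q := mapFst (f ω) P)
      (fun p => sum_nonneg fun a _ => hP _) ((sum_mapFst (f ω) P).trans hP1) hs0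
  have hK := IsAlmostUniversal.sum_mul_condRenyiExp_mapFst_le huniv (by positivity) hμ hμ1 hP
    hP1 hs0.le hs1
  have hmean : ∑ ω, μ ω * mutualInfo (mapFst (f ω) P) ≤ 1 / s * M ^ s * condRenyiExp s P := by
    rw [mul_assoc, one_div, le_inv_mul_iff₀ hs0]
    calc s * ∑ ω, μ ω * mutualInfo (mapFst (f ω) P)
        = ∑ ω, μ ω * (s * mutualInfo (mapFst (f ω) P)) := by
          rw [mul_sum]; exact sum_congr rfl fun ω _ => mul_left_comm _ _ _
      _ ≤ ∑ ω, μ ω * ((M : ℝ) ^ s * condRenyiExp s (mapFst (f ω) P) - 1) :=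
          sum_le_sum fun ω _ => mul_le_mul_of_nonneg_left (hMI ω) (hμ ω)
      _ = (M : ℝ) ^ s * ∑ ω, μ ω * condRenyiExp s (mapFst (f ω) P) - 1 := by
          simp only [mul_sub, sum_sub_distrib, hμ1, mul_sum, mul_left_comm, mul_one]
      _ ≤ (M : ℝ) ^ s * (condRenyiExp s P + (1 / M) ^ s) - 1 := by gcongr
      _ = (M : ℝ) ^ s * condRenyiExp s P := by
          rw [mul_add, ← mul_rpow (by positivity) (by positivity),
            mul_one_div_cancel (by positivity), one_rpow, add_sub_cancel_right]
  exact ⟨hmean, exists_le_of_sum_mul_le hμ hμ1 hmean⟩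

/-- Theorem 2 of the paper: for a universal₂ hash family `f` from `A` to `Fin M`,
a joint distribution `P` on `A × E`, and `s ∈ (0,1]`, the expected mutual
information satisfies `E_X I(f_X(A):E) ≤ (1/s)·M^s·e^{−H̃_{1+s}(A|E)}`;
in particular some fixed function `f ω` achieves this bound. -/
theorem expected_mutual_info_hash_bound
    {A E Ω : Type*} [Fintype A] [Fintype E] [Fintype Ω] [DecidableEq A]
    (M : ℕ) (hM : 0 < M)
    (μ : Ω → ℝ) (hμ : ∀ ω, 0 ≤ μ ω) (hμ1 : ∑ ω, μ ω = 1)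
    (f : Ω → A → Fin M)
    (huniv : ∀ a₁ a₂ : A, a₁ ≠ a₂ →
      ∑ ω ∈ univ.filter (fun ω => f ω a₁ = f ω a₂), μ ω ≤ 1 / M)
    (P : A × E → ℝ) (hP : ∀ p, 0 ≤ P p) (hP1 : ∑ p, P p = 1)
    (s : ℝ) (hs0 : 0 < s) (hs1 : s ≤ 1) :
    -- mutual information of the hashed variable with E, for the function `f ω`
    (∑ ω, μ ω *
        ((-∑ i : Fin M,
            (∑ e, ∑ a ∈ univ.filter (fun a => f ω a = i), P (a, e)) *
              Real.log (∑ e, ∑ a ∈ univ.filter (fun a => f ω a = i), P (a, e)))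
          - (-∑ i : Fin M, ∑ e,
              (∑ a ∈ univ.filter (fun a => f ω a = i), P (a, e)) *
                Real.log ((∑ a ∈ univ.filter (fun a => f ω a = i), P (a, e)) /
                  (∑ a', P (a', e)))))
      ≤ (1 / s) * (M : ℝ) ^ s *
          Real.exp (-(-Real.log (∑ a, ∑ e, P (a, e) ^ (1 + s) * (∑ a', P (a', e)) ^ (-s)))))
    ∧ (∃ ω : Ω,
        ((-∑ i : Fin M,
            (∑ e, ∑ a ∈ univ.filter (fun a => f ω a = i), P (a, e)) *
              Real.log (∑ e, ∑ a ∈ univ.filter (fun a => f ω a = i), P (a, e)))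
          - (-∑ i : Fin M, ∑ e,
              (∑ a ∈ univ.filter (fun a => f ω a = i), P (a, e)) *
                Real.log ((∑ a ∈ univ.filter (fun a => f ω a = i), P (a, e)) /
                  (∑ a', P (a', e)))))
        ≤ (1 / s) * (M : ℝ) ^ s *
            Real.exp (-(-Real.log (∑ a, ∑ e, P (a, e) ^ (1 + s) * (∑ a', P (a', e)) ^ (-s))))) :=
  expected_mutual_info_hash_bound_general M hM μ hμ hμ1 f huniv P hP hP1 s hs0 hs1
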